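/- arXiv:2108.02309 — 5 statements merged into one kernel-verified Lean document; each statement's English description precedes it below -/
import Mathlib

section
/- Let R be a commutative ring that is a ℚ-algebra and a₁, b₁ ∈ R. Set f = (1/6)a₁b₁³ − (1/48)a₁⁴ + (1/3)a₁²b₁² − (1/3)b₁⁴ − (1/6)a₁³b₁ and g = (1/864)(a₁² − 2a₁b₁ + 2b₁²)(a₁⁴ + 14a₁³b₁ + 26a₁²b₁² − 116a₁b₁³ + 76b₁⁴). Then 4f³ + 27g² = (1/16)(a₁² + 9a₁b₁ − 11b₁²)(a₁ − b₁)⁵·b₁⁵. -/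
/-- For the ℤ₅-torsion Weierstrass model over a commutative `ℚ`-algebra `R`,
with `f = (1/6)a₁b₁³ − (1/48)a₁⁴ + (1/3)a₁²b₁² − (1/3)b₁⁴ − (1/6)a₁³b₁` and
`g = (1/864)(a₁² − 2a₁b₁ + 2b₁²)(a₁⁴ + 14a₁³b₁ + 26a₁²b₁² − 116a₁b₁³ + 76b₁⁴)`,
one has `4f³ + 27g² = (1/16)(a₁² + 9a₁b₁ − 11b₁²)(a₁ − b₁)⁵ b₁⁵`. -/
theorem discriminant_Z5_torsion_form {R : Type*} [CommRing R] [Algebra ℚ R]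
    (a₁ b₁ f g : R)
    (hf : f = ((1 : ℚ)/6) • (a₁ * b₁ ^ 3) - ((1 : ℚ)/48) • a₁ ^ 4
      + ((1 : ℚ)/3) • (a₁ ^ 2 * b₁ ^ 2) - ((1 : ℚ)/3) • b₁ ^ 4
      - ((1 : ℚ)/6) • (a₁ ^ 3 * b₁))
    (hg : g = ((1 : ℚ)/864) • ((a₁ ^ 2 - 2 * (a₁ * b₁) + 2 * b₁ ^ 2)
      * (a₁ ^ 4 + 14 * (a₁ ^ 3 * b₁) + 26 * (a₁ ^ 2 * b₁ ^ 2)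
        - 116 * (a₁ * b₁ ^ 3) + 76 * b₁ ^ 4))) :
    4 * f ^ 3 + 27 * g ^ 2
      = ((1 : ℚ)/16) • ((a₁ ^ 2 + 9 * (a₁ * b₁) - 11 * b₁ ^ 2)
        * (a₁ - b₁) ^ 5 * b₁ ^ 5) := by
  simp only [Algebra.smul_def] at hf hg ⊢
  set c : ℚ →+* R := algebraMap ℚ R with hc
  have e1 : c ((1:ℚ)/6) = 8 * c ((1:ℚ)/48) := by
    rw [← map_ofNat c 8, ← map_mul]; norm_num
  have e2 : c ((1:ℚ)/3) = 16 * c ((1:ℚ)/48) := by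
    rw [← map_ofNat c 16, ← map_mul]; norm_num
  have e3 : c ((1:ℚ)/864) ^ 2 = c ((4:ℚ)/27) * c ((1:ℚ)/48) ^ 3 := by
    rw [← map_pow, ← map_pow, ← map_mul]; norm_num
  have e4 : c ((1:ℚ)/16) = 6912 * c ((1:ℚ)/48) ^ 3 := by
    rw [← map_ofNat c 6912, ← map_pow, ← map_mul]; norm_num
  have h4 : (27 : R) * c ((4:ℚ)/27) = 4 := by
    rw [← map_ofNat c 27, ← map_mul, show (27:ℚ)*((4:ℚ)/27) = 4 by norm_num, map_ofNat]
  rw [hf, hg, mul_pow, e3, e1, e2, e4]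
  linear_combination (c ((1:ℚ)/48) ^ 3 *
    ((a₁ ^ 2 - 2 * (a₁ * b₁) + 2 * b₁ ^ 2)
      * (a₁ ^ 4 + 14 * (a₁ ^ 3 * b₁) + 26 * (a₁ ^ 2 * b₁ ^ 2)
        - 116 * (a₁ * b₁ ^ 3) + 76 * b₁ ^ 4)) ^ 2) * h4
end

section
/- Let R be a commutative ring that is a ℚ-algebra and e₀, e₁, e₂, e₃ ∈ R. Define b̌ = −e₁ + 2e₂e₃ − 2e₃³, ě₂ = −2e₂ + 3e₃², ě₃ = −e₀ + e₂² + e₁e₃ − 4e₂e₃² + 3e₃⁴. Then the charge-2 Morrison-Park Weierstrass coefficients equal the charge-1 ones: ě₃ − ě₂²/3 = −(1/3)e₂² + e₁e₃ − e₀, and (2/27)ě₂³ − (1/3)ě₂ě₃ + (1/4)b̌² = (1/4)e₁² + e₀e₃² + (2/27)e₂³ − (1/3)e₁e₂e₃ − (2/3)e₀e₂. -/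
private lemma MorrisonPark_cancel108 {R : Type*} [CommRing R] [Algebra ℚ R] {x y : R}
    (h : (108 : ℚ) • x = (108 : ℚ) • y) : x = y := by
  have := congrArg (fun z : R => ((108 : ℚ)⁻¹) • z) h
  simpa [smul_smul] using this


/-- Morrison–Park models: with `b̌ = −e₁ + 2e₂e₃ − 2e₃³`, `ě₂ = −2e₂ + 3e₃²`,
`ě₃ = −e₀ + e₂² + e₁e₃ − 4e₂e₃² + 3e₃⁴`, the charge-2 Morrison–Park Weierstrass
coefficients equal the charge-1 ones: `ě₃ − ě₂²/3 = −(1/3)e₂² + e₁e₃ − e₀` and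
`(2/27)ě₂³ − (1/3)ě₂ě₃ + (1/4)b̌² = (1/4)e₁² + e₀e₃² + (2/27)e₂³ − (1/3)e₁e₂e₃ − (2/3)e₀e₂`. -/
theorem MorrisonPark_q2_eq_q1 {R : Type*} [CommRing R] [Algebra ℚ R]
    (e₀ e₁ e₂ e₃ bc ec₂ ec₃ : R)
    (hb : bc = -e₁ + 2 * (e₂ * e₃) - 2 * e₃ ^ 3)
    (he₂ : ec₂ = -(2 * e₂) + 3 * e₃ ^ 2)
    (he₃ : ec₃ = -e₀ + e₂ ^ 2 + e₁ * e₃ - 4 * (e₂ * e₃ ^ 2) + 3 * e₃ ^ 4) :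
    ec₃ - ((1 : ℚ)/3) • ec₂ ^ 2 = -(((1 : ℚ)/3) • e₂ ^ 2) + e₁ * e₃ - e₀ ∧
    ((2 : ℚ)/27) • ec₂ ^ 3 - ((1 : ℚ)/3) • (ec₂ * ec₃) + ((1 : ℚ)/4) • bc ^ 2
      = ((1 : ℚ)/4) • e₁ ^ 2 + e₀ * e₃ ^ 2 + ((2 : ℚ)/27) • e₂ ^ 3
        - ((1 : ℚ)/3) • (e₁ * e₂ * e₃) - ((2 : ℚ)/3) • (e₀ * e₂) := by
  subst hb he₂ he₃
  constructor <;>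
  · apply MorrisonPark_cancel108
    simp only [smul_sub, smul_add, smul_neg, smul_smul]
    norm_num
    simp only [Algebra.smul_def, map_ofNat]
    ring
end

section
/- Let F be a field, a₂, a₃, a₄ ∈ F with a₃ ≠ 0, and let W be the Weierstrass curve over F with coefficients (a₁, a₂, a₃, a₄, a₆) = (0, a₂, a₃, a₄, 0), i.e. y² + a₃y = x³ + a₂x² + a₄x, with discriminant Δ ≠ 0. Then the point s = (0,0) of the elliptic curve W satisfies s + s = (a₄²/a₃² − a₂, a₂a₄/a₃ − a₄³/a₃³ − a₃). -/
open WeierstrassCurve.Affine (Point)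
open scoped Classical

/-- Let `W : y² + a₃y = x³ + a₂x² + a₄x` (the `q = 1` Morrison–Park model with
its generating section shifted to the origin) over a field `F`, with `a₃ ≠ 0`
and discriminant `Δ ≠ 0`.  Then the point `s = (0,0)` satisfies
`s + s = (a₄²/a₃² − a₂, a₂a₄/a₃ − a₄³/a₃³ − a₃)`. -/
theorem doubling_of_origin_MorrisonPark {F : Type*} [Field F] (a₂ a₃ a₄ : F)
    (ha₃ : a₃ ≠ 0)
    (hΔ : (⟨0, a₂, a₃, a₄, 0⟩ : WeierstrassCurve F).Δ ≠ 0) :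
    ∃ (h : (⟨0, a₂, a₃, a₄, 0⟩ : WeierstrassCurve F).toAffine.Nonsingular 0 0)
      (h' : (⟨0, a₂, a₃, a₄, 0⟩ : WeierstrassCurve F).toAffine.Nonsingular
        (a₄ ^ 2 / a₃ ^ 2 - a₂) (a₂ * a₄ / a₃ - a₄ ^ 3 / a₃ ^ 3 - a₃)),
      Point.some _ _ h + Point.some _ _ h = Point.some _ _ h' := by
  set W : WeierstrassCurve F := ⟨0, a₂, a₃, a₄, 0⟩ with hW
  have h0 : W.toAffine.Nonsingular 0 0 :=
    (W.toAffine.equation_iff_nonsingular_of_Δ_ne_zero hΔ).mp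
      (by rw [W.toAffine.equation_iff]; simp [hW])
  have hne : (0 : F) ≠ W.toAffine.negY 0 0 := by
    simp only [WeierstrassCurve.Affine.negY, hW]
    intro h
    exact ha₃ (by linear_combination h)
  have hL : W.toAffine.slope 0 0 0 0 = a₄ / a₃ := by
    rw [WeierstrassCurve.Affine.slope_of_Y_ne rfl hne]
    simp [WeierstrassCurve.Affine.negY, hW]
  have hX : W.toAffine.addX 0 0 (W.toAffine.slope 0 0 0 0) = a₄ ^ 2 / a₃ ^ 2 - a₂ := by
    rw [hL]
    simp only [WeierstrassCurve.Affine.addX, hW]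
    field_simp
    ring
  have hY : W.toAffine.addY 0 0 0 (W.toAffine.slope 0 0 0 0)
      = a₂ * a₄ / a₃ - a₄ ^ 3 / a₃ ^ 3 - a₃ := by
    rw [WeierstrassCurve.Affine.addY, WeierstrassCurve.Affine.negY,
      WeierstrassCurve.Affine.negAddY, hX, hL]
    simp only [hW]
    field_simp
    ring
  have hns := WeierstrassCurve.Affine.nonsingular_add h0 h0 (fun h => hne h.2)
  refine ⟨h0, hX ▸ hY ▸ hns, ?_⟩
  rw [WeierstrassCurve.Affine.Point.add_self_of_Y_ne hne]
  congr 1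
end

section
/- Let R be a commutative ring that is a ℚ-algebra and φ₀, φ₁, f₂, σ ∈ R. Set α₂ = (1/4)φ₀² + φ₁σ and α₄ = (f₂ + (1/3)φ₁²)σ². Then α₄ − α₂²/3 = −(1/48)φ₀⁴ − (1/6)φ₀²φ₁σ + f₂σ², and 2α₂³/27 − α₂α₄/3 = (1/864)φ₀⁶ + (1/72)φ₀⁴φ₁σ + ((1/36)φ₀²φ₁² − (1/12)φ₀²f₂)σ² − ((1/3)φ₁f₂ + (1/27)φ₁³)σ³. Hence the generic SU(4) Weierstrass model with f₃ = g₄ = 0 coincides with the ℤ₂-torsion form y² = x(x² + α₂x + α₄). -/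
/-- With `α₂ = (1/4)φ₀² + φ₁σ` and `α₄ = (f₂ + (1/3)φ₁²)σ²` over a commutative
`ℚ`-algebra `R`, one has `α₄ − α₂²/3 = −(1/48)φ₀⁴ − (1/6)φ₀²φ₁σ + f₂σ²` and
`2α₂³/27 − α₂α₄/3 = (1/864)φ₀⁶ + (1/72)φ₀⁴φ₁σ + ((1/36)φ₀²φ₁² − (1/12)φ₀²f₂)σ²
− ((1/3)φ₁f₂ + (1/27)φ₁³)σ³`; hence the generic SU(4) Weierstrass model with
`f₃ = g₄ = 0` coincides with the ℤ₂-torsion form `y² = x(x² + α₂x + α₄)`. -/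
theorem su4_model_is_Z2_torsion_form {R : Type*} [CommRing R] [Algebra ℚ R]
    (φ₀ φ₁ f₂ σ α₂ α₄ : R)
    (hα₂ : α₂ = ((1 : ℚ)/4) • φ₀ ^ 2 + φ₁ * σ)
    (hα₄ : α₄ = (f₂ + ((1 : ℚ)/3) • φ₁ ^ 2) * σ ^ 2) :
    α₄ - ((1 : ℚ)/3) • α₂ ^ 2
      = -(((1 : ℚ)/48) • φ₀ ^ 4) - ((1 : ℚ)/6) • (φ₀ ^ 2 * φ₁ * σ) + f₂ * σ ^ 2 ∧
    ((2 : ℚ)/27) • α₂ ^ 3 - ((1 : ℚ)/3) • (α₂ * α₄)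
      = ((1 : ℚ)/864) • φ₀ ^ 6 + ((1 : ℚ)/72) • (φ₀ ^ 4 * φ₁ * σ)
        + (((1 : ℚ)/36) • (φ₀ ^ 2 * φ₁ ^ 2) - ((1 : ℚ)/12) • (φ₀ ^ 2 * f₂)) * σ ^ 2
        - (((1 : ℚ)/3) • (φ₁ * f₂) + ((1 : ℚ)/27) • φ₁ ^ 3) * σ ^ 3 := by
  have mul_three : ∀ x : R, x * 3 = x + x + x := fun x => by ring
  subst hα₂ hα₄
  constructor <;>
    · ring_nf
      simp only [mul_two, mul_three, smul_add, smul_pow, smul_mul_assoc, mul_smul_comm, smul_smul]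
      ring_nf
      simp only [smul_mul_assoc, mul_two, mul_three, smul_add]
      module
end

section
/- Let ζ = exp(2πi/6) ∈ ℂ. The map ψ from the direct product of the circle group {λ ∈ ℂ : |λ| = 1} with SU(2, ℂ) and SU(3, ℂ) to SU(5, ℂ) (with index set partitioned into a 2-element and a 3-element block), given by ψ(λ, α, β) = the block-diagonal matrix with upper-left 2×2 block λ³·α and lower-right 3×3 block λ⁻²·β, is a well-defined group homomorphism (its values have determinant λ⁶·λ⁻⁶ = 1 and are unitary), and its kernel is the cyclic subgroup generated by the element g₀ = (ζ⁻¹, −1₂, ζ⁻²·1₃), which has order 6. Consequently the standard model gauge group, the subgroup of SU(5) of block-diagonal unitary matrices with blocks of sizes 2 and 3, is isomorphic to (U(1) × SU(2) × SU(3))/(ℤ/6ℤ). -/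
/-- The special unitary group `SU(n, ℂ)` is a group. -/
noncomputable instance specialUnitaryGroup.instGroup (n : Type*) [Fintype n] [DecidableEq n] :
    Group (Matrix.specialUnitaryGroup n ℂ) :=
  { (inferInstance : Monoid (Matrix.specialUnitaryGroup n ℂ)) with
    inv := fun A => ⟨star (A : Matrix n n ℂ), by
      have hA := A.2
      rw [Matrix.mem_specialUnitaryGroup_iff] at hA ⊢
      refine ⟨Unitary.star_mem hA.1, ?_⟩
      have : (A : Matrix n n ℂ).det = 1 := hA.2
      simp [Matrix.star_eq_conjTranspose, Matrix.det_conjTranspose, this]⟩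
    inv_mul_cancel := fun A => Subtype.ext ((Submonoid.mem_inf.mp A.2).1.1) }

open Matrix Complex

set_option maxRecDepth 10000

noncomputable section

namespace SMGaux

variable {n : Type*} [Fintype n] [DecidableEq n]

lemma star_mul_self_of_abs_one {c : ℂ} (hc : ‖c‖ = 1) : c * star c = 1 := by
  rw [RCLike.star_def, Complex.mul_conj, Complex.normSq_eq_norm_sq, hc]
  norm_num

lemma smul_mem_unitary {c : ℂ} (hc : ‖c‖ = 1) {A : Matrix n n ℂ}
    (hA : A ∈ Matrix.unitaryGroup n ℂ) : c • A ∈ Matrix.unitaryGroup n ℂ := by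
  rw [Matrix.mem_unitaryGroup_iff] at hA ⊢
  calc (c • A) * star (c • A) = (c * star c) • (A * star A) := by
        simp [Matrix.star_eq_conjTranspose, Matrix.conjTranspose_smul, smul_smul,
          Matrix.smul_mul, Matrix.mul_smul, mul_comm]
    _ = 1 := by rw [star_mul_self_of_abs_one hc, hA, one_smul]

lemma abs_det_of_unitary {A : Matrix n n ℂ} (hA : A ∈ Matrix.unitaryGroup n ℂ) :
    ‖A.det‖ = 1 := by
  rw [Matrix.mem_unitaryGroup_iff] at hA
  have h : A.det * star A.det = 1 := by
    have := congrArg Matrix.det hA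
    rwa [Matrix.det_mul, Matrix.star_eq_conjTranspose, Matrix.det_conjTranspose,
      Matrix.det_one] at this
  have h2 : Complex.normSq A.det = 1 := by
    have := Complex.mul_conj A.det
    rw [← RCLike.star_def, h] at this
    exact_mod_cast this.symm
  rw [Complex.norm_def, h2, Real.sqrt_one]

lemma fromBlocks_mem_unitary {A : Matrix (Fin 2) (Fin 2) ℂ} {B : Matrix (Fin 3) (Fin 3) ℂ}
    (hA : A ∈ Matrix.unitaryGroup (Fin 2) ℂ) (hB : B ∈ Matrix.unitaryGroup (Fin 3) ℂ) :
    Matrix.fromBlocks A 0 0 B ∈ Matrix.unitaryGroup (Fin 2 ⊕ Fin 3) ℂ := by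
  rw [Matrix.mem_unitaryGroup_iff] at hA hB ⊢
  rw [Matrix.star_eq_conjTranspose, Matrix.fromBlocks_conjTranspose]
  simp only [Matrix.conjTranspose_zero, Matrix.fromBlocks_multiply, Matrix.mul_zero,
    Matrix.zero_mul, add_zero, zero_add]
  rw [← Matrix.star_eq_conjTranspose, ← Matrix.star_eq_conjTranspose, hA, hB,
    Matrix.fromBlocks_one]

/-- coercion of SU(n) into matrices, as a monoid hom -/
def suCoeHom : Matrix.specialUnitaryGroup n ℂ →* Matrix n n ℂ where
  toFun A := (A : Matrix n n ℂ)
  map_one' := rfl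
  map_mul' _ _ := rfl

lemma su_coe_pow (A : Matrix.specialUnitaryGroup n ℂ) (k : ℕ) :
    ((A ^ k : Matrix.specialUnitaryGroup n ℂ) : Matrix n n ℂ) = (A : Matrix n n ℂ) ^ k :=
  map_pow (suCoeHom (n := n)) A k

lemma circle_coe_pow (z : Circle) (k : ℕ) : ((z ^ k : Circle) : ℂ) = (z : ℂ) ^ k :=
  map_pow Circle.coeHom z k

lemma inv_pow_helper {c : ℂ} (a b : ℕ) (h : c ^ (a + b) = 1) : (c⁻¹) ^ b = c ^ a := by
  rw [inv_pow]
  rw [pow_add] at h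
  exact inv_eq_of_mul_eq_one_left h

/-- `ζ = exp(2πi/6)` -/
def ζC : ℂ := Complex.exp (2 * (Real.pi : ℂ) * Complex.I / 6)

lemma hprim : IsPrimitiveRoot ζC 6 := by
  have := Complex.isPrimitiveRoot_exp 6 (by norm_num)
  have h6 : ((6 : ℕ) : ℂ) = (6 : ℂ) := by norm_num
  rwa [ζC]

lemma ζ6 : ζC ^ 6 = 1 := hprim.pow_eq_one

lemma ζ3 : ζC ^ 3 = -1 := by
  rw [ζC, ← Complex.exp_nat_mul]
  have : ((3 : ℕ) : ℂ) * (2 * (Real.pi : ℂ) * Complex.I / 6) = Real.pi * Complex.I := by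
    push_cast; ring
  rw [this, Complex.exp_pi_mul_I]

lemma ζabs : ‖ζC‖ = 1 := by
  have h : 2 * (Real.pi : ℂ) * Complex.I / 6 = ((Real.pi / 3 : ℝ) : ℂ) * Complex.I := by
    push_cast; ring
  rw [ζC, h, Complex.norm_exp]
  simp [Complex.mul_re]

lemma ζne : ζC ≠ 0 := by
  intro h
  have := ζabs
  rw [h] at this
  simp at this

/-- circle version of ζ -/
def ζcir : Circle := Circle.exp (Real.pi / 3)

lemma ζcir_coe : (ζcir : ℂ) = ζC := by
  rw [ζcir, Circle.coe_exp, ζC]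
  congr 1
  push_cast
  ring

lemma psi_mem (z : Circle) (α : Matrix.specialUnitaryGroup (Fin 2) ℂ)
    (β : Matrix.specialUnitaryGroup (Fin 3) ℂ) :
    Matrix.fromBlocks ((z : ℂ) ^ 3 • (α : Matrix (Fin 2) (Fin 2) ℂ)) 0 0
        (((z : ℂ)⁻¹) ^ 2 • (β : Matrix (Fin 3) (Fin 3) ℂ))
      ∈ Matrix.specialUnitaryGroup (Fin 2 ⊕ Fin 3) ℂ := by
  obtain ⟨hαu, hαd⟩ := Matrix.mem_specialUnitaryGroup_iff.mp α.2
  obtain ⟨hβu, hβd⟩ := Matrix.mem_specialUnitaryGroup_iff.mp β.2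
  have hz : (z : ℂ) ≠ 0 := z.coe_ne_zero
  rw [Matrix.mem_specialUnitaryGroup_iff]
  constructor
  · exact fromBlocks_mem_unitary
      (smul_mem_unitary (by simp [Circle.norm_coe]) hαu) (smul_mem_unitary (by simp [Circle.norm_coe]) hβu)
  · rw [Matrix.det_fromBlocks_zero₁₂, Matrix.det_smul, Matrix.det_smul, hαd, hβd]
    simp only [Fintype.card_fin, mul_one]
    rw [← pow_mul, ← pow_mul, inv_pow, mul_inv_cancel₀ (pow_ne_zero _ hz)]

/-- the homomorphism ψ -/
def ψ₀ : Circle × Matrix.specialUnitaryGroup (Fin 2) ℂ × Matrix.specialUnitaryGroup (Fin 3) ℂ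
    →* Matrix.specialUnitaryGroup (Fin 2 ⊕ Fin 3) ℂ where
  toFun p := ⟨Matrix.fromBlocks ((p.1 : ℂ) ^ 3 • (p.2.1 : Matrix (Fin 2) (Fin 2) ℂ)) 0 0
      (((p.1 : ℂ)⁻¹) ^ 2 • (p.2.2 : Matrix (Fin 3) (Fin 3) ℂ)), psi_mem p.1 p.2.1 p.2.2⟩
  map_one' := by
    apply Subtype.ext
    simp [Matrix.fromBlocks_one]
  map_mul' p q := by
    apply Subtype.ext
    show Matrix.fromBlocks _ _ _ _ = Matrix.fromBlocks _ _ _ _ * Matrix.fromBlocks _ _ _ _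
    simp only [Prod.fst_mul, Prod.snd_mul, Circle.coe_mul, Submonoid.coe_mul,
      Matrix.fromBlocks_multiply, Matrix.mul_zero, Matrix.zero_mul, add_zero, zero_add,
      mul_pow, mul_inv, Matrix.smul_mul, Matrix.mul_smul, smul_smul, smul_zero,
      mul_comm]

lemma neg_one_mem_SU2 :
    (-1 : Matrix (Fin 2) (Fin 2) ℂ) ∈ Matrix.specialUnitaryGroup (Fin 2) ℂ := by
  rw [Matrix.mem_specialUnitaryGroup_iff]
  refine ⟨by rw [Matrix.mem_unitaryGroup_iff]; simp, ?_⟩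
  simp [Matrix.det_neg]

lemma g3_mem : ((ζC⁻¹) ^ 2 • (1 : Matrix (Fin 3) (Fin 3) ℂ))
    ∈ Matrix.specialUnitaryGroup (Fin 3) ℂ := by
  rw [Matrix.mem_specialUnitaryGroup_iff]
  refine ⟨smul_mem_unitary (by simp [ζabs]) (by rw [Matrix.mem_unitaryGroup_iff]; simp), ?_⟩
  rw [Matrix.det_smul]
  simp only [Fintype.card_fin, Matrix.det_one, mul_one]
  rw [← pow_mul, inv_pow]
  norm_num [ζ6]

/-- the generator of the kernel -/
def g₀ : Circle × Matrix.specialUnitaryGroup (Fin 2) ℂ × Matrix.specialUnitaryGroup (Fin 3) ℂ :=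
  (ζcir⁻¹, ⟨-1, neg_one_mem_SU2⟩, ⟨(ζC⁻¹) ^ 2 • 1, g3_mem⟩)

lemma ψ₀_g₀_aux1 : (ζC⁻¹) ^ 3 • (-1 : Matrix (Fin 2) (Fin 2) ℂ) = 1 := by
  rw [inv_pow, ζ3]
  norm_num

lemma ψ₀_g₀_aux2 :
    ((ζC⁻¹)⁻¹) ^ 2 • ((ζC⁻¹) ^ 2 • (1 : Matrix (Fin 3) (Fin 3) ℂ)) = 1 := by
  rw [smul_smul, inv_inv, ← mul_pow, mul_inv_cancel₀ ζne, one_pow, one_smul]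

lemma g₀_mem_ker : g₀ ∈ ψ₀.ker := by
  rw [MonoidHom.mem_ker]
  apply Subtype.ext
  have hc : (g₀.1 : ℂ) = ζC⁻¹ := by
    rw [show g₀.1 = ζcir⁻¹ from rfl, Circle.coe_inv, ζcir_coe]
  show Matrix.fromBlocks ((g₀.1 : ℂ) ^ 3 • (g₀.2.1 : Matrix (Fin 2) (Fin 2) ℂ)) 0 0
      (((g₀.1 : ℂ)⁻¹) ^ 2 • (g₀.2.2 : Matrix (Fin 3) (Fin 3) ℂ)) = 1
  rw [hc]
  show Matrix.fromBlocks ((ζC⁻¹) ^ 3 • (-1)) 0 0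
      (((ζC⁻¹)⁻¹) ^ 2 • ((ζC⁻¹) ^ 2 • 1)) = 1
  rw [ψ₀_g₀_aux1, ψ₀_g₀_aux2, Matrix.fromBlocks_one]

lemma hg6 : g₀ ^ 6 = 1 := by
  have h1 : g₀.1 ^ 6 = 1 := by
    apply Subtype.ext
    rw [circle_coe_pow]
    show ((ζcir⁻¹ : Circle) : ℂ) ^ 6 = 1
    rw [Circle.coe_inv, ζcir_coe, inv_pow, ζ6, inv_one]
  have h2 : g₀.2.1 ^ 6 = 1 := by
    apply Subtype.ext
    rw [su_coe_pow]
    show (-1 : Matrix (Fin 2) (Fin 2) ℂ) ^ 6 = 1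
    exact Even.neg_one_pow ⟨3, rfl⟩
  have h3 : g₀.2.2 ^ 6 = 1 := by
    apply Subtype.ext
    rw [su_coe_pow]
    show ((ζC⁻¹) ^ 2 • (1 : Matrix (Fin 3) (Fin 3) ℂ)) ^ 6 = 1
    rw [smul_pow, one_pow, ← pow_mul, inv_pow,
      show (2 * 6 : ℕ) = 6 * 2 from rfl, pow_mul, ζ6, one_pow, inv_one, one_smul]
  exact Prod.ext h1 (Prod.ext h2 h3)

lemma hord : orderOf g₀ = 6 := by
  have hd1 : orderOf g₀ ∣ 6 := orderOf_dvd_of_pow_eq_one hg6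
  have hd2 : 6 ∣ orderOf g₀ := by
    have h := pow_orderOf_eq_one g₀
    have h1 : g₀.1 ^ orderOf g₀ = 1 := by rw [← Prod.pow_fst, h]; rfl
    rw [show g₀.1 = ζcir⁻¹ from rfl] at h1
    have h2 : (ζC⁻¹) ^ orderOf g₀ = 1 := by
      have := congrArg (fun w : Circle => (w : ℂ)) h1
      simpa [circle_coe_pow, Circle.coe_inv, ζcir_coe] using this
    have h3 : ζC ^ orderOf g₀ = 1 := by
      rw [inv_pow, inv_eq_one] at h2
      exact h2
    exact (hprim.pow_eq_one_iff_dvd _).mp h3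
  exact Nat.dvd_antisymm hd1 hd2

lemma hker : ψ₀.ker = Subgroup.zpowers g₀ := by
  apply le_antisymm
  · rintro ⟨z, α, β⟩ hp
    rw [MonoidHom.mem_ker] at hp
    have hmat : Matrix.fromBlocks ((z : ℂ) ^ 3 • (α : Matrix (Fin 2) (Fin 2) ℂ)) 0 0
        (((z : ℂ)⁻¹) ^ 2 • (β : Matrix (Fin 3) (Fin 3) ℂ)) = Matrix.fromBlocks 1 0 0 1 := by
      rw [Matrix.fromBlocks_one]
      exact congrArg
        (fun M : Matrix.specialUnitaryGroup (Fin 2 ⊕ Fin 3) ℂ =>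
          (M : Matrix (Fin 2 ⊕ Fin 3) (Fin 2 ⊕ Fin 3) ℂ)) hp
    have hα : (z : ℂ) ^ 3 • (α : Matrix (Fin 2) (Fin 2) ℂ) = 1 := by
      have h' := congrArg Matrix.toBlocks₁₁ hmat
      rwa [Matrix.toBlocks_fromBlocks₁₁, Matrix.toBlocks_fromBlocks₁₁] at h'
    have hβ : ((z : ℂ)⁻¹) ^ 2 • (β : Matrix (Fin 3) (Fin 3) ℂ) = 1 := by
      have h' := congrArg Matrix.toBlocks₂₂ hmat
      rwa [Matrix.toBlocks_fromBlocks₂₂, Matrix.toBlocks_fromBlocks₂₂] at h'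
    have hz0 : (z : ℂ) ≠ 0 := z.coe_ne_zero
    have hdetα : ((α : Matrix (Fin 2) (Fin 2) ℂ)).det = 1 :=
      (Matrix.mem_specialUnitaryGroup_iff.mp α.2).2
    have hz6 : (z : ℂ) ^ 6 = 1 := by
      have h := congrArg Matrix.det hα
      rw [Matrix.det_smul, hdetα, Matrix.det_one, mul_one, Fintype.card_fin, ← pow_mul] at h
      norm_num at h
      exact h
    obtain ⟨i, hi6, hiz⟩ := hprim.eq_pow_of_pow_eq_one hz6
    set k : ℕ := (6 - i) % 6 with hkdef
    have hik : ζC ^ (i + k) = 1 := by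
      rcases Nat.eq_zero_or_pos i with h0 | h0
      · subst h0
        rw [hkdef]
        norm_num
      · have hk : k = 6 - i := by
          rw [hkdef]
          exact Nat.mod_eq_of_lt (by omega)
        have h6' : i + k = 6 := by omega
        rw [h6', ζ6]
    rw [Subgroup.mem_zpowers_iff]
    refine ⟨(k : ℤ), ?_⟩
    rw [zpow_natCast]
    have hc1 : g₀.1 ^ k = z := by
      apply Subtype.ext
      rw [circle_coe_pow]
      show ((ζcir⁻¹ : Circle) : ℂ) ^ k = (z : ℂ)
      rw [Circle.coe_inv, ζcir_coe, ← hiz]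
      exact inv_pow_helper i k hik
    have hm1 : ((-1 : ℂ)) ^ (i + k) = 1 := by
      have hh : ((-1 : ℂ)) ^ (i + k) = (ζC ^ (i + k)) ^ 3 := by
        rw [← ζ3, ← pow_mul, ← pow_mul, Nat.mul_comm]
      rw [hh, hik, one_pow]
    have hc2 : g₀.2.1 ^ k = α := by
      apply Subtype.ext
      rw [su_coe_pow]
      show (-1 : Matrix (Fin 2) (Fin 2) ℂ) ^ k = (α : Matrix (Fin 2) (Fin 2) ℂ)
      have hα2 : (α : Matrix (Fin 2) (Fin 2) ℂ) = ((z : ℂ) ^ 3)⁻¹ • 1 := by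
        rw [eq_inv_smul_iff₀ (pow_ne_zero _ hz0), hα]
      have hz3 : (z : ℂ) ^ 3 = (-1 : ℂ) ^ i := by
        rw [← hiz, pow_right_comm, ζ3]
      rw [hα2, hz3]
      have hneg : (-1 : Matrix (Fin 2) (Fin 2) ℂ) = (-1 : ℂ) • 1 := by simp
      rw [hneg, smul_pow, one_pow]
      congr 1
      rw [add_comm, pow_add] at hm1
      exact eq_inv_of_mul_eq_one_left hm1
    have hc3 : g₀.2.2 ^ k = β := by
      apply Subtype.ext
      rw [su_coe_pow]
      show ((ζC⁻¹) ^ 2 • (1 : Matrix (Fin 3) (Fin 3) ℂ)) ^ k = (β : Matrix (Fin 3) (Fin 3) ℂ)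
      have hβ2 : (β : Matrix (Fin 3) (Fin 3) ℂ) = (((z : ℂ)⁻¹) ^ 2)⁻¹ • 1 := by
        rw [eq_inv_smul_iff₀ (pow_ne_zero _ (inv_ne_zero hz0)), hβ]
      have h2ik : ζC ^ (i * 2 + 2 * k) = 1 := by
        have he : i * 2 + 2 * k = (i + k) * 2 := by ring
        rw [he, pow_mul, hik, one_pow]
      rw [hβ2, smul_pow, one_pow, ← pow_mul]
      congr 1
      have hrhs : (((z : ℂ))⁻¹ ^ 2)⁻¹ = (z : ℂ) ^ 2 := by rw [← inv_pow, inv_inv]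
      rw [hrhs, ← hiz, ← pow_mul]
      exact inv_pow_helper (i * 2) (2 * k) h2ik
    exact Prod.ext hc1 (Prod.ext hc2 hc3)
  · exact Subgroup.zpowers_le.mpr g₀_mem_ker

lemma hrange : (ψ₀.range : Set (Matrix.specialUnitaryGroup (Fin 2 ⊕ Fin 3) ℂ))
    = {M : Matrix.specialUnitaryGroup (Fin 2 ⊕ Fin 3) ℂ |
        (M : Matrix (Fin 2 ⊕ Fin 3) (Fin 2 ⊕ Fin 3) ℂ).toBlocks₁₂ = 0 ∧
        (M : Matrix (Fin 2 ⊕ Fin 3) (Fin 2 ⊕ Fin 3) ℂ).toBlocks₂₁ = 0} := by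
  ext M
  simp only [SetLike.mem_coe, MonoidHom.mem_range, Set.mem_setOf_eq]
  constructor
  · rintro ⟨⟨z, α, β⟩, rfl⟩
    exact ⟨Matrix.toBlocks_fromBlocks₁₂ _ _ _ _, Matrix.toBlocks_fromBlocks₂₁ _ _ _ _⟩
  · rintro ⟨h12, h21⟩
    set A := (M : Matrix (Fin 2 ⊕ Fin 3) (Fin 2 ⊕ Fin 3) ℂ).toBlocks₁₁ with hAdef
    set B := (M : Matrix (Fin 2 ⊕ Fin 3) (Fin 2 ⊕ Fin 3) ℂ).toBlocks₂₂ with hBdef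
    have hM : (M : Matrix (Fin 2 ⊕ Fin 3) (Fin 2 ⊕ Fin 3) ℂ) = Matrix.fromBlocks A 0 0 B := by
      conv_lhs => rw [← Matrix.fromBlocks_toBlocks
        (M : Matrix (Fin 2 ⊕ Fin 3) (Fin 2 ⊕ Fin 3) ℂ)]
      rw [h12, h21]
    obtain ⟨hMu, hMd⟩ := Matrix.mem_specialUnitaryGroup_iff.mp M.2
    rw [Matrix.mem_unitaryGroup_iff] at hMu
    rw [hM] at hMu hMd
    rw [Matrix.star_eq_conjTranspose, Matrix.fromBlocks_conjTranspose] at hMu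
    simp only [Matrix.conjTranspose_zero, Matrix.fromBlocks_multiply, Matrix.mul_zero,
      Matrix.zero_mul, add_zero, zero_add] at hMu
    rw [show (1 : Matrix (Fin 2 ⊕ Fin 3) (Fin 2 ⊕ Fin 3) ℂ) = Matrix.fromBlocks 1 0 0 1 from
      Matrix.fromBlocks_one.symm] at hMu
    have hAu : A ∈ Matrix.unitaryGroup (Fin 2) ℂ := by
      rw [Matrix.mem_unitaryGroup_iff, Matrix.star_eq_conjTranspose]
      have h' := congrArg Matrix.toBlocks₁₁ hMu
      rwa [Matrix.toBlocks_fromBlocks₁₁, Matrix.toBlocks_fromBlocks₁₁] at h'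
    have hBu : B ∈ Matrix.unitaryGroup (Fin 3) ℂ := by
      rw [Matrix.mem_unitaryGroup_iff, Matrix.star_eq_conjTranspose]
      have h' := congrArg Matrix.toBlocks₂₂ hMu
      rwa [Matrix.toBlocks_fromBlocks₂₂, Matrix.toBlocks_fromBlocks₂₂] at h'
    rw [Matrix.det_fromBlocks_zero₁₂] at hMd
    have habs : ‖A.det‖ = 1 := abs_det_of_unitary hAu
    have hdetA0 : A.det ≠ 0 := by
      intro h0
      rw [h0] at habs
      simp at habs
    set z : Circle := Circle.exp (Complex.arg A.det / 6) with hzdef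
    have hz6 : (z : ℂ) ^ 6 = A.det := by
      rw [hzdef, Circle.coe_exp, ← Complex.exp_nat_mul]
      have h1 : ((6 : ℕ) : ℂ) * (↑(Complex.arg A.det / 6) * Complex.I)
          = ↑(Complex.arg A.det) * Complex.I := by push_cast; ring
      rw [h1]
      conv_rhs => rw [← Complex.norm_mul_exp_arg_mul_I A.det]
      rw [habs, Complex.ofReal_one, one_mul]
    have hz0 : (z : ℂ) ≠ 0 := z.coe_ne_zero
    have hαm : ((z : ℂ) ^ 3)⁻¹ • A ∈ Matrix.specialUnitaryGroup (Fin 2) ℂ := by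
      rw [Matrix.mem_specialUnitaryGroup_iff]
      refine ⟨smul_mem_unitary (by simp [Circle.norm_coe]) hAu, ?_⟩
      rw [Matrix.det_smul, Fintype.card_fin, inv_pow, ← pow_mul]
      norm_num [hz6, inv_mul_cancel₀ hdetA0]
    have hβm : (z : ℂ) ^ 2 • B ∈ Matrix.specialUnitaryGroup (Fin 3) ℂ := by
      rw [Matrix.mem_specialUnitaryGroup_iff]
      refine ⟨smul_mem_unitary (by simp [Circle.norm_coe]) hBu, ?_⟩
      rw [Matrix.det_smul, Fintype.card_fin, ← pow_mul]
      norm_num [hz6, hMd]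
    refine ⟨(z, ⟨_, hαm⟩, ⟨_, hβm⟩), ?_⟩
    apply Subtype.ext
    show Matrix.fromBlocks ((z : ℂ) ^ 3 • ((z : ℂ) ^ 3)⁻¹ • A) 0 0
        (((z : ℂ)⁻¹) ^ 2 • ((z : ℂ) ^ 2 • B))
      = (M : Matrix (Fin 2 ⊕ Fin 3) (Fin 2 ⊕ Fin 3) ℂ)
    rw [smul_smul, mul_inv_cancel₀ (pow_ne_zero _ hz0), one_smul, smul_smul, inv_pow,
      inv_mul_cancel₀ (pow_ne_zero _ hz0), one_smul, hM]

end SMGaux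

end

/-- For `ζ = exp(2πi/6)`, the map
`ψ(λ, α, β) = blockdiag(λ³·α, λ⁻²·β)` from `U(1) × SU(2, ℂ) × SU(3, ℂ)` to
`SU(5, ℂ)` (with index set partitioned into a 2-element and a 3-element block)
is a group homomorphism whose kernel is the cyclic subgroup generated by
`g₀ = (ζ⁻¹, −1₂, ζ⁻²·1₃)`, an element of order 6.  Consequently the standard
model gauge group, i.e. the subgroup of `SU(5)` of block-diagonal unitary
matrices with blocks of sizes 2 and 3, is isomorphic to
`(U(1) × SU(2) × SU(3))/(ℤ/6ℤ)`. -/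
theorem standardModel_gauge_group_quotient :
    ∃ ψ : Circle × Matrix.specialUnitaryGroup (Fin 2) ℂ × Matrix.specialUnitaryGroup (Fin 3) ℂ
        →* Matrix.specialUnitaryGroup (Fin 2 ⊕ Fin 3) ℂ,
      (∀ (z : Circle) (α : Matrix.specialUnitaryGroup (Fin 2) ℂ)
          (β : Matrix.specialUnitaryGroup (Fin 3) ℂ),
        ((ψ (z, α, β) : Matrix (Fin 2 ⊕ Fin 3) (Fin 2 ⊕ Fin 3) ℂ))
          = Matrix.fromBlocks
              ((z : ℂ) ^ 3 • (α : Matrix (Fin 2) (Fin 2) ℂ)) 0 0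
              (((z : ℂ)⁻¹) ^ 2 • (β : Matrix (Fin 3) (Fin 3) ℂ))) ∧
      ∃ g₀ : Circle × Matrix.specialUnitaryGroup (Fin 2) ℂ
          × Matrix.specialUnitaryGroup (Fin 3) ℂ,
        (g₀.1 : ℂ) = (Complex.exp (2 * (Real.pi : ℂ) * Complex.I / 6))⁻¹ ∧
        (g₀.2.1 : Matrix (Fin 2) (Fin 2) ℂ) = -1 ∧
        (g₀.2.2 : Matrix (Fin 3) (Fin 3) ℂ)
          = ((Complex.exp (2 * (Real.pi : ℂ) * Complex.I / 6))⁻¹) ^ 2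
            • (1 : Matrix (Fin 3) (Fin 3) ℂ) ∧
        MonoidHom.ker ψ = Subgroup.zpowers g₀ ∧
        orderOf g₀ = 6 ∧
        ∃ H : Subgroup (Matrix.specialUnitaryGroup (Fin 2 ⊕ Fin 3) ℂ),
          (H : Set (Matrix.specialUnitaryGroup (Fin 2 ⊕ Fin 3) ℂ))
            = {M : Matrix.specialUnitaryGroup (Fin 2 ⊕ Fin 3) ℂ | (M : Matrix (Fin 2 ⊕ Fin 3) (Fin 2 ⊕ Fin 3) ℂ).toBlocks₁₂ = 0 ∧
                   (M : Matrix (Fin 2 ⊕ Fin 3) (Fin 2 ⊕ Fin 3) ℂ).toBlocks₂₁ = 0} ∧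
          Nonempty (H ≃*
            (Circle × Matrix.specialUnitaryGroup (Fin 2) ℂ
              × Matrix.specialUnitaryGroup (Fin 3) ℂ) ⧸ MonoidHom.ker ψ) := by
  refine ⟨SMGaux.ψ₀, fun z α β => rfl, SMGaux.g₀, ?_, rfl, rfl, SMGaux.hker, SMGaux.hord,
    SMGaux.ψ₀.range, SMGaux.hrange, ⟨(QuotientGroup.quotientKerEquivRange SMGaux.ψ₀).symm⟩⟩
  rw [show SMGaux.g₀.1 = SMGaux.ζcir⁻¹ from rfl, Circle.coe_inv, SMGaux.ζcir_coe]
  rfl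
end
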